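/- Let G be a non-Hamiltonian graph on n vertices, C a longest cycle with a fixed orientation, R a component of G − V(C), and A the set of neighbors of R on C. If v_i, v_j ∈ A are distinct and {v_i⁻, v_i⁺} ∈ Ẽ(G), then neither {v_i, v_j⁻} nor {v_i, v_j⁺} belongs to Ẽ(G). -/

import Mathlib

open SimpleGraph

/-- `{x, y}` is an Ore-edge of `G`: either an actual edge, or a pair of distinct
vertices with degree sum at least `n`. -/
def OreEdge {V : Type*} [Fintype V] (G : SimpleGraph V) [DecidableRel G.Adj]
    (x y : V) : Prop :=
  x ≠ y ∧ (G.Adj x y ∨ Fintype.card V ≤ G.degree x + G.degree y)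

/-- The cycle `C = f 0, f 1, …, f (m-1), f 0` in `G`, with the orientation given
by increasing indices (so `f (i+1)` is the successor and `f (i-1)` the
predecessor of `f i` on `C`). -/
def IsCycleEmbedding {V : Type*} (G : SimpleGraph V) (m : ℕ) (f : ZMod m → V) : Prop :=
  3 ≤ m ∧ Function.Injective f ∧ ∀ i : ZMod m, G.Adj (f i) (f (i + 1))

/-- `f` describes a longest cycle of `G` (of length `m`). -/
def IsLongestCycle {V : Type*} (G : SimpleGraph V) (m : ℕ) (f : ZMod m → V) : Prop :=
  IsCycleEmbedding G m f ∧
  ∀ (u : V) (C : G.Walk u u), C.IsCycle → C.length ≤ m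

/-- `R` is a connected component of `G - V(C)`, where `C` is the cycle given
by `f`: `R` is a nonempty set of vertices off `C`, connected in the induced
subgraph, and closed under adjacency to vertices off `C`. -/
def IsComponentOutside {V : Type*} (G : SimpleGraph V) (m : ℕ) (f : ZMod m → V)
    (R : Set V) : Prop :=
  R.Nonempty ∧ (∀ x ∈ R, x ∉ Set.range f) ∧ (G.induce R).Connected ∧
  ∀ x ∈ R, ∀ y : V, G.Adj x y → y ∉ Set.range f → y ∈ R


/-!
If every cycle of `G` has length at most `m`, so does every cycle of `G + uw` for an Ore-pair
`{u, w}`: a longer cycle through `uw` leaves a path of `G` from `u` to `w` on at least `m + 1`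
vertices, and Ore's crossing argument turns a path whose ends have degree sum at least `n` into a
cycle of `G` with at least as many vertices. So adding `f (i - 1) f (i + 1)` and then
`f i f (j - 1)` (still an Ore-pair in the larger graph) creates no cycle longer than `C`. But the
enlarged graph contains the cycle `f i, (path through R), f j, …, f (i - 1), f (i + 1), …,
f (j - 1)`, which runs through all of `C` and at least one vertex of `R`. The statement for
`f (j + 1)` is the one for `f (j - 1)` with the orientation of `C` reversed.
-/

theorem List.IsChain.countP_dropLast_add_countP_tail_le {α : Type*} {P Q : α → Prop}
    [DecidablePred P] [DecidablePred Q] :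
    ∀ {l : List α}, l.IsChain (fun a b => ¬(P a ∧ Q b)) →
      l.dropLast.countP (P ·) + l.tail.countP (Q ·) ≤ l.length - 1
  | [], _ | [_], _ => by simp
  | a :: b :: l, h => by
    have ih := (List.isChain_cons_cons.mp h).2.countP_dropLast_add_countP_tail_le
    have hab := (List.isChain_cons_cons.mp h).1
    simp only [List.dropLast_cons_cons, List.tail_cons, List.countP_cons, List.length_cons] at ih ⊢
    by_cases hp : P a <;> by_cases hq : Q b <;> simp_all <;> omega

open Finset

namespace SimpleGraph

variable {V : Type*} {G : SimpleGraph V}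

def CircumferenceLE (G : SimpleGraph V) (m : ℕ) : Prop :=
  ∀ (u : V) (c : G.Walk u u), c.IsCycle → c.length ≤ m

theorem exists_isCycle_length_eq_of_isChain {l : List V} (hnd : l.Nodup)
    (hch : l.IsChain G.Adj) (hclose : ∀ x ∈ l.getLast?, ∀ y ∈ l.head?, G.Adj x y)
    (h3 : 3 ≤ l.length) : ∃ (v : V) (c : G.Walk v v), c.IsCycle ∧ c.length = l.length := by
  have hne : l ≠ [] := List.ne_nil_of_length_pos (by omega)
  have hadj : G.Adj (l.getLast hne) (l.head hne) :=
    hclose _ (List.getLast?_eq_some_getLast hne) _ (List.head?_eq_some_head hne)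
  set p := Walk.ofSupport l hne hch
  have hp : p.IsPath := by rw [Walk.isPath_def, Walk.support_ofSupport]; exact hnd
  have hlen : p.length = l.length - 1 := Walk.length_ofSupport hne hch
  refine ⟨_, Walk.cons hadj p, (Walk.cons_isCycle_iff p hadj).mpr ⟨hp, fun he => ?_⟩, ?_⟩
  · have := hp.length_eq_one_of_mem_edges (Sym2.eq_swap ▸ he)
    omega
  · rw [Walk.length_cons]; omega

theorem exists_isCycle_length_eq_of_crossing {l₁ l₂ : List V} {a b u w : V}
    (hnd : (l₁ ++ a :: b :: l₂).Nodup) (hch : (l₁ ++ a :: b :: l₂).IsChain G.Adj)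
    (h3 : 3 ≤ (l₁ ++ a :: b :: l₂).length) (hu : u ∈ (l₁ ++ a :: b :: l₂).head?)
    (hw : w ∈ (l₁ ++ a :: b :: l₂).getLast?) (hwa : G.Adj w a) (hub : G.Adj u b) :
    ∃ (v : V) (c : G.Walk v v), c.IsCycle ∧ c.length = (l₁ ++ a :: b :: l₂).length := by
  obtain ⟨hch₁, -, hch₂⟩ := List.isChain_append_cons_cons.mp hch
  have hw' : w ∈ (b :: l₂).getLast? := by simpa using hw
  have hu' : u ∈ (l₁ ++ [a]).head? := by simpa using hu
  have hperm : (b :: l₂ ++ (l₁ ++ [a]).reverse).Perm (l₁ ++ a :: b :: l₂) := by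
    simpa using (List.perm_append_comm (l₁ := b :: l₂)).trans
      ((List.reverse_perm (l₁ ++ [a])).append_right (b :: l₂))
  have hch' : (b :: l₂ ++ (l₁ ++ [a]).reverse).IsChain G.Adj := by
    refine List.isChain_append.mpr ⟨hch₂, ?_, fun x hx y hy => ?_⟩
    · exact List.isChain_reverse.mpr (hch₁.imp fun _ _ h => h.symm)
    · obtain rfl := Option.mem_unique hx hw'
      obtain rfl : a = y := by simpa using hy
      exact hwa
  have hclose : ∀ x ∈ (b :: l₂ ++ (l₁ ++ [a]).reverse).getLast?,
      ∀ y ∈ (b :: l₂ ++ (l₁ ++ [a]).reverse).head?, G.Adj x y := by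
    intro x hx y hy
    obtain rfl : b = y := by simpa using hy
    rw [List.getLast?_append, List.getLast?_reverse, Option.mem_def.mp hu', Option.some_or,
      Option.mem_some_iff] at hx
    exact hx ▸ hub
  rw [← hperm.length_eq] at h3 ⊢
  exact exists_isCycle_length_eq_of_isChain (hperm.nodup_iff.mpr hnd) hch' hclose h3

theorem exists_isCycle_length_eq_of_commonNeighbor {l : List V} {u w z : V} (hnd : l.Nodup)
    (hch : l.IsChain G.Adj) (h2 : 2 ≤ l.length) (hu : u ∈ l.head?) (hw : w ∈ l.getLast?)
    (hz : z ∉ l) (huz : G.Adj u z) (hwz : G.Adj w z) :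
    ∃ (v : V) (c : G.Walk v v), c.IsCycle ∧ c.length = l.length + 1 := by
  have hnd' : (l ++ [z]).Nodup := by
    simpa [List.nodup_append, hnd] using fun a ha (h : a = z) => hz (h ▸ ha)
  have hch' : (l ++ [z]).IsChain G.Adj :=
    List.isChain_append.mpr ⟨hch, .singleton z, fun x hx y hy => by
      obtain rfl := Option.mem_unique hx hw
      obtain rfl : z = y := by simpa using hy
      exact hwz⟩
  have hclose : ∀ x ∈ (l ++ [z]).getLast?, ∀ y ∈ (l ++ [z]).head?, G.Adj x y := by
    intro x hx y hy
    obtain rfl : z = x := by simpa using hx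
    obtain rfl : u = y := by simpa [Option.mem_def.mp hu] using hy
    exact huz.symm
  simpa using exists_isCycle_length_eq_of_isChain hnd' hch' hclose (by simp; omega)

theorem degree_add_degree_lt_of_isChain [Fintype V] [DecidableRel G.Adj] {l : List V} {u w : V}
    (hnd : l.Nodup) (hu : u ∈ l.head?) (hw : w ∈ l.getLast?)
    (hcross : l.IsChain fun a b => ¬(G.Adj w a ∧ G.Adj u b))
    (hout : ∀ z ∉ l, ¬(G.Adj u z ∧ G.Adj w z)) :
    G.degree u + G.degree w < Fintype.card V := by
  classical
  set s := l.toFinset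
  have hs : #s = l.length := List.toFinset_card_of_nodup hnd
  have hsplit (v : V) : G.degree v = l.countP (G.Adj v ·) + #(G.neighborFinset v \ s) := by
    rw [← card_neighborFinset_eq_degree, ← Finset.card_inter_add_card_sdiff _ s,
      List.countP_eq_length_filter, ← List.toFinset_card_of_nodup (hnd.filter _),
      List.toFinset_filter]
    congr 2
    ext z
    simp [s, and_comm]
  have hu' : l.countP (G.Adj u ·) = l.tail.countP (G.Adj u ·) := by
    obtain ⟨t, rfl⟩ := List.head?_eq_some_iff.mp hu
    simp
  have hw' : l.countP (G.Adj w ·) = l.dropLast.countP (G.Adj w ·) := by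
    obtain ⟨t, rfl⟩ := List.getLast?_eq_some_iff.mp hw
    simp
  have hon := hcross.countP_dropLast_add_countP_tail_le
  have hoff : #(G.neighborFinset u \ s) + #(G.neighborFinset w \ s) ≤ Fintype.card V - #s := by
    rw [← Finset.card_union_of_disjoint, ← Finset.card_compl]
    · exact Finset.card_le_card fun z hz => by
        simp only [Finset.mem_union, Finset.mem_sdiff] at hz
        exact Finset.mem_compl.mpr (hz.elim (·.2) (·.2))
    · refine Finset.disjoint_left.mpr fun z hzu hzw => ?_
      simp only [Finset.mem_sdiff, mem_neighborFinset, s, List.mem_toFinset] at hzu hzw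
      exact hout z hzu.2 ⟨hzu.1, hzw.1⟩
  have hlen : #s ≤ Fintype.card V := Finset.card_le_univ s
  have hpos : 0 < l.length := List.length_pos_of_ne_nil (by rintro rfl; simp at hu)
  rw [hsplit u, hsplit w]
  omega

theorem exists_isCycle_length_ge_of_oreEdge [Fintype V] [DecidableRel G.Adj] {l : List V}
    (hnd : l.Nodup) (hch : l.IsChain G.Adj) (h3 : 3 ≤ l.length) {u w : V}
    (hu : u ∈ l.head?) (hw : w ∈ l.getLast?) (h : OreEdge G u w) :
    ∃ (v : V) (c : G.Walk v v), c.IsCycle ∧ l.length ≤ c.length := by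
  by_cases huw : G.Adj u w
  · obtain ⟨v, c, hc, hlen⟩ := exists_isCycle_length_eq_of_isChain hnd hch
      (fun x hx y hy => by
        obtain rfl := Option.mem_unique hx hw
        obtain rfl := Option.mem_unique hy hu
        exact huw.symm) h3
    exact ⟨v, c, hc, hlen.ge⟩
  by_contra! hno
  have hcross : l.IsChain fun a b => ¬(G.Adj w a ∧ G.Adj u b) := by
    refine List.isChain_iff_forall_rel_of_append_cons_cons.mpr
      fun a b l₁ l₂ hl ⟨hwa, hub⟩ => ?_
    subst hl
    obtain ⟨v, c, hc, hlen⟩ := exists_isCycle_length_eq_of_crossing hnd hch h3 hu hw hwa hub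
    exact (hno v c hc).ne hlen
  have hout : ∀ z ∉ l, ¬(G.Adj u z ∧ G.Adj w z) := by
    rintro z hz ⟨huz, hwz⟩
    obtain ⟨v, c, hc, hlen⟩ :=
      exists_isCycle_length_eq_of_commonNeighbor hnd hch (by omega) hu hw hz huz hwz
    exact (hno v c hc).not_ge (by omega)
  exact (h.2.resolve_left huw).not_gt (degree_add_degree_lt_of_isChain hnd hu hw hcross hout)

theorem Walk.IsCycle.exists_isPath_of_mem_edges {v u w : V} {c : G.Walk v v} (hc : c.IsCycle)
    (he : s(u, w) ∈ c.edges) :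
    ∃ p : G.Walk u w, p.IsPath ∧ s(u, w) ∉ p.edges ∧ p.length + 1 = c.length := by
  classical
  have hu : u ∈ c.support := c.fst_mem_support_of_mem_edges he
  set c' := c.rotate u hu
  have hc' : c'.IsCycle := hc.rotate hu
  have he' : s(u, w) ∈ c'.edges := (c.rotate_edges u hu).mem_iff.mpr he
  have hw : w ∈ c'.support := c'.snd_mem_support_of_mem_edges he'
  set p₁ := c'.takeUntil w hw
  set p₂ := c'.dropUntil w hw
  have hspec : p₁.append p₂ = c' := c'.take_spec hw
  have hp₁ : p₁.IsPath := hc'.isPath_takeUntil hw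
  have hp₂ : p₂.IsPath :=
    (hspec ▸ hc').isPath_of_append_right (Walk.not_nil_of_ne (c'.adj_of_mem_edges he').ne)
  have hdisj := hc'.isTrail.disjoint_edges_takeUntil_dropUntil hw
  have hlen : p₁.length + p₂.length = c.length := by
    rw [← Walk.length_append, hspec, Walk.length_rotate]
  have he'' : s(u, w) ∈ p₁.edges ++ p₂.edges := by rw [← Walk.edges_append, hspec]; exact he'
  -- A path from `u` to `w` through the edge `s(u, w)` is that edge alone.
  rcases List.mem_append.mp he'' with h₁ | h₂
  · refine ⟨p₂.reverse, hp₂.reverse, ?_, ?_⟩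
    · rw [Walk.edges_reverse, List.mem_reverse]
      exact hdisj h₁
    · have := hp₁.length_eq_one_of_mem_edges h₁
      rw [Walk.length_reverse]
      omega
  · refine ⟨p₁, hp₁, fun h₁ => hdisj h₁ h₂, ?_⟩
    have := hp₂.length_eq_one_of_mem_edges (Sym2.eq_swap ▸ h₂)
    omega

theorem CircumferenceLE.sup_edge [Fintype V] [DecidableRel G.Adj] {m : ℕ} {u w : V}
    (hG : G.CircumferenceLE m) (h : OreEdge G u w) : (G ⊔ edge u w).CircumferenceLE m := by
  have hG' : ∀ e ∈ (G ⊔ edge u w).edgeSet, e ≠ s(u, w) → e ∈ G.edgeSet := by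
    intro e he hne
    rw [edgeSet_sup] at he
    exact he.resolve_right fun he => hne (edgeSet_edge_subset he)
  intro v c hc
  by_cases he : s(u, w) ∈ c.edges
  · obtain ⟨p, hp, hpe, hlen⟩ := hc.exists_isPath_of_mem_edges he
    have hpG : ∀ e ∈ p.edges, e ∈ G.edgeSet := fun e he =>
      hG' e (p.edges_subset_edgeSet he) (ne_of_mem_of_not_mem he hpe)
    set q := p.transfer G hpG
    obtain ⟨x, c', hc', hlen'⟩ := exists_isCycle_length_ge_of_oreEdge
      (Walk.isPath_def _ |>.mp (hp.transfer hpG)) q.isChain_adj_support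
      (by simp only [Walk.length_support, Walk.length_transfer]; have := hc.three_le_length; omega)
      (by rw [List.head?_eq_some_head q.support_ne_nil, q.head_support]; rfl)
      (by rw [List.getLast?_eq_some_getLast q.support_ne_nil, q.getLast_support]; rfl) h
    have := hG x c' hc'
    simp only [Walk.length_support, Walk.length_transfer] at hlen'
    omega
  · have hcG : ∀ e ∈ c.edges, e ∈ G.edgeSet := fun e he' =>
      hG' e (c.edges_subset_edgeSet he') (ne_of_mem_of_not_mem he' he)
    simpa using hG v (c.transfer G hcG) (hc.transfer hcG)

theorem exists_isChain_of_connected_induce {S : Set V} (hS : (G.induce S).Connected) {x y : V}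
    (hx : x ∈ S) (hy : y ∈ S) :
    ∃ l : List V, l.Nodup ∧ l.IsChain G.Adj ∧ (∀ z ∈ l, z ∈ S) ∧ x ∈ l.head? ∧ y ∈ l.getLast? := by
  obtain ⟨p, hp⟩ := (hS ⟨x, hx⟩ ⟨y, hy⟩).exists_isPath
  refine ⟨p.support.map Subtype.val, hp.support_nodup.map Subtype.val_injective,
    (List.isChain_map _).mpr p.isChain_adj_support, fun z hz => ?_, ?_, ?_⟩
  · obtain ⟨⟨z, hzS⟩, -, rfl⟩ := List.mem_map.mp hz
    exact hzS
  · rw [List.head?_map, List.head?_eq_some_head p.support_ne_nil, p.head_support]; rfl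
  · rw [List.getLast?_map, List.getLast?_eq_some_getLast p.support_ne_nil, p.getLast_support]
    rfl

end SimpleGraph

section CycleArc
variable {V : Type*} {m : ℕ}

def cycleArc (f : ZMod m → V) (a : ZMod m) (n : ℕ) : List V :=
  (List.range n).map fun k : ℕ => f (a + k)

variable {f : ZMod m → V} {a : ZMod m} {n : ℕ}

theorem cycleArc_add (p q : ℕ) :
    cycleArc f a (p + q) = cycleArc f a p ++ cycleArc f (a + p) q := by
  simp [cycleArc, List.range_add, add_assoc]

theorem cycleArc_succ : cycleArc f a (n + 1) = f a :: cycleArc f (a + 1) n := by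
  rw [add_comm, cycleArc_add]
  simp [cycleArc]

theorem head?_cycleArc_succ : (cycleArc f a (n + 1)).head? = some (f a) := by
  rw [cycleArc_succ]; rfl

theorem getLast?_cycleArc_succ : (cycleArc f a (n + 1)).getLast? = some (f (a + n)) := by
  simp [cycleArc, List.range_succ]

theorem mem_range_of_mem_cycleArc {z : V} (hz : z ∈ cycleArc f a n) : z ∈ Set.range f := by
  obtain ⟨k, -, rfl⟩ := List.mem_map.mp hz
  exact ⟨_, rfl⟩

theorem isChain_cycleArc {G : SimpleGraph V} (hadj : ∀ k, G.Adj (f k) (f (k + 1))) :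
    (cycleArc f a n).IsChain G.Adj := by
  induction n generalizing a with
  | zero => simp [cycleArc]
  | succ n ih =>
    rw [cycleArc_succ]
    refine List.isChain_cons.mpr ⟨fun y hy => ?_, ih⟩
    cases n with
    | zero => simp [cycleArc] at hy
    | succ n => rw [head?_cycleArc_succ, Option.mem_some_iff] at hy; exact hy ▸ hadj a

theorem nodup_cycleArc (hf : Function.Injective f) (hn : n ≤ m) : (cycleArc f a n).Nodup := by
  refine (List.nodup_range).map_on fun k hk l hl hkl => ?_
  rw [List.mem_range] at hk hl
  have := add_left_cancel (hf hkl)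
  rwa [ZMod.natCast_eq_natCast_iff', Nat.mod_eq_of_lt (by omega), Nat.mod_eq_of_lt (by omega)]
    at this

end CycleArc

section OreEdge
variable {V : Type*} [Fintype V] {G : SimpleGraph V} [DecidableRel G.Adj] {u w : V}

theorem OreEdge.symm (h : OreEdge G u w) : OreEdge G w u :=
  ⟨h.1.symm, h.2.imp (fun hadj => hadj.symm) fun hd => by omega⟩

theorem OreEdge.mono {H : SimpleGraph V} [DecidableRel H.Adj] (hGH : G ≤ H)
    (h : OreEdge G u w) : OreEdge H u w :=
  ⟨h.1, h.2.imp (fun hadj => hGH hadj)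
    fun hd => hd.trans (add_le_add (degree_le_of_le hGH) (degree_le_of_le hGH))⟩

end OreEdge

-- `i` cuts `ZMod m` into the arcs `j, …, i - 1` and `i + 1, …, j - 1`, of `d + 1` and `e + 1`
-- elements.
theorem ZMod.exists_arc_lengths {m : ℕ} [NeZero m] {i j : ZMod m} (h₁ : i ≠ j)
    (h₂ : i ≠ j - 1) : ∃ d e : ℕ, d + e + 3 = m ∧ j + (d + 1 : ℕ) = i ∧ i + 1 + e = j - 1 := by
  set k := (i - j).val
  have hk : (k : ZMod m) = i - j := ZMod.natCast_zmod_val _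
  have hkm : k < m := ZMod.val_lt _
  have hk0 : k ≠ 0 := fun h => h₁ (sub_eq_zero.mp ((ZMod.val_eq_zero _).mp h))
  have hk1 : k + 1 ≠ m := fun h => h₂ <| by
    have e : ((k + 1 : ℕ) : ZMod m) = 0 := by rw [h, ZMod.natCast_self]
    push_cast at e
    linear_combination e - hk
  refine ⟨k - 1, m - k - 2, by omega, by rw [Nat.sub_add_cancel (by omega), hk]; ring, ?_⟩
  have e : ((m - k - 2 + k + 2 : ℕ) : ZMod m) = 0 := by
    rw [show m - k - 2 + k + 2 = m by omega, ZMod.natCast_self]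
  push_cast at e
  linear_combination e - hk

section Bypass
variable {V : Type*} {G H : SimpleGraph V} {m : ℕ} {f : ZMod m → V}

theorem IsCycleEmbedding.exists_path_of_bypass (hC : IsCycleEmbedding G m f) (hGH : G ≤ H)
    {i j : ZMod m} (hij : i ≠ j) (hij' : i ≠ j - 1) (hbypass : H.Adj (f (i - 1)) (f (i + 1))) :
    ∃ l : List V, l.Nodup ∧ l.IsChain H.Adj ∧ l.length + 1 = m ∧ f i ∉ l ∧
      (∀ z ∈ l, z ∈ Set.range f) ∧ f j ∈ l.head? ∧ f (j - 1) ∈ l.getLast? := by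
  obtain ⟨hm, hinj, hadj⟩ := hC
  have : NeZero m := ⟨by omega⟩
  obtain ⟨d, e, hde, hdi, hej⟩ := ZMod.exists_arc_lengths hij hij'
  set Q := cycleArc f j (d + 1)
  set P := cycleArc f (i + 1) (e + 1)
  have hQP : Q ++ f i :: P = cycleArc f j (d + 1 + (e + 1 + 1)) := by
    rw [cycleArc_add, hdi, cycleArc_succ (n := e + 1)]
  have hnd : (f i :: (Q ++ P)).Nodup := by
    rw [← List.nodup_middle, hQP]
    exact nodup_cycleArc hinj (by omega)
  have hlift {l : List V} (h : l.IsChain G.Adj) : l.IsChain H.Adj := h.imp fun _ _ h => hGH h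
  refine ⟨Q ++ P, (List.nodup_cons.mp hnd).2, ?_, by simp [Q, P, cycleArc]; omega,
    (List.nodup_cons.mp hnd).1, ?_, ?_, ?_⟩
  · refine List.isChain_append.mpr ⟨hlift (isChain_cycleArc hadj), hlift (isChain_cycleArc hadj),
      fun a ha b hb => ?_⟩
    rw [getLast?_cycleArc_succ, Option.mem_some_iff] at ha
    rw [head?_cycleArc_succ, Option.mem_some_iff] at hb
    subst ha hb
    convert hbypass using 2
    rw [← hdi]
    push_cast
    ring
  · intro z hz
    exact (List.mem_append.mp hz).elim mem_range_of_mem_cycleArc mem_range_of_mem_cycleArc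
  · rw [List.head?_append, head?_cycleArc_succ]
    rfl
  · rw [List.getLast?_append, getLast?_cycleArc_succ, hej]
    rfl

theorem IsCycleEmbedding.exists_isCycle_length_gt (hC : IsCycleEmbedding G m f) (hGH : G ≤ H)
    {i j : ZMod m} (hij : i ≠ j) (hbypass : H.Adj (f (i - 1)) (f (i + 1)))
    (hclose : H.Adj (f (j - 1)) (f i)) {I : List V} (hInd : I.Nodup) (hIch : I.IsChain G.Adj)
    (hoff : ∀ z ∈ I, z ∉ Set.range f) {x y : V} (hx : x ∈ I.head?) (hy : y ∈ I.getLast?)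
    (hix : G.Adj (f i) x) (hyj : G.Adj y (f j)) :
    ∃ (v : V) (c : H.Walk v v), c.IsCycle ∧ m < c.length := by
  obtain ⟨l, hnd, hch, hlen, hil, hlC, hjl, hjl'⟩ :=
    hC.exists_path_of_bypass hGH hij (fun h => hclose.ne (by rw [h])) hbypass
  have hnd' : ((f i :: I) ++ l).Nodup := by
    refine List.nodup_append.mpr ⟨List.nodup_cons.mpr ⟨fun h => hoff _ h ⟨i, rfl⟩, hInd⟩, hnd, ?_⟩
    rintro a ha b hb rfl
    obtain rfl | ha := List.mem_cons.mp ha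
    exacts [hil hb, hoff a ha (hlC a hb)]
  have hch' : ((f i :: I) ++ l).IsChain H.Adj := by
    refine List.isChain_append.mpr ⟨List.isChain_cons.mpr ⟨fun z hz => ?_, ?_⟩, hch, ?_⟩
    · obtain rfl := Option.mem_unique hz hx
      exact hGH hix
    · exact hIch.imp fun _ _ h => hGH h
    · intro a ha b hb
      rw [List.getLast?_cons, Option.mem_def.mp hy] at ha
      obtain rfl : y = a := by simpa using ha
      obtain rfl := Option.mem_unique hb hjl
      exact hGH hyj
  have hclose' : ∀ a ∈ ((f i :: I) ++ l).getLast?, ∀ b ∈ ((f i :: I) ++ l).head?, H.Adj a b := by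
    intro a ha b hb
    rw [List.getLast?_append, Option.mem_def.mp hjl', Option.some_or, Option.mem_some_iff] at ha
    subst ha
    obtain rfl : f i = b := by simpa using hb
    exact hclose
  have hI : 0 < I.length := List.length_pos_of_ne_nil (by rintro rfl; simp at hx)
  have hlen' : ((f i :: I) ++ l).length = m + I.length := by simp; omega
  obtain ⟨v, c, hc, hc_len⟩ :=
    exists_isCycle_length_eq_of_isChain hnd' hch' hclose' (by have := hC.1; omega)
  exact ⟨v, c, hc, by omega⟩

end Bypass

section Main
variable {V : Type*} {G : SimpleGraph V} {m : ℕ} {f : ZMod m → V} {R : Set V}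

theorem IsLongestCycle.comp_neg (hC : IsLongestCycle G m f) :
    IsLongestCycle G m fun k => f (-k) := by
  obtain ⟨⟨hm, hinj, hadj⟩, hlong⟩ := hC
  refine ⟨⟨hm, fun a b h => neg_injective (hinj h), fun k => ?_⟩, hlong⟩
  have := (hadj (-k - 1)).symm
  rwa [sub_add_cancel, ← neg_add'] at this

theorem IsComponentOutside.comp_neg (hR : IsComponentOutside G m f R) :
    IsComponentOutside G m (fun k => f (-k)) R := by
  have hrange : Set.range (fun k => f (-k)) = Set.range f := neg_surjective.range_comp f
  simpa only [IsComponentOutside, hrange] using hR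

theorem not_oreEdge_pred_of_oreEdge [Fintype V] [DecidableRel G.Adj] (hC : IsLongestCycle G m f)
    (hR : IsComponentOutside G m f R) {i j : ZMod m} (hij : i ≠ j)
    (hi : ∃ x ∈ R, G.Adj (f i) x) (hj : ∃ y ∈ R, G.Adj (f j) y)
    (hOre : OreEdge G (f (i - 1)) (f (i + 1))) : ¬OreEdge G (f i) (f (j - 1)) := by
  classical
  intro hOre'
  obtain ⟨x, hxR, hix⟩ := hi
  obtain ⟨y, hyR, hjy⟩ := hj
  obtain ⟨I, hInd, hIch, hIR, hx, hy⟩ := exists_isChain_of_connected_induce hR.2.2.1 hxR hyR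
  set H := G ⊔ edge (f (i - 1)) (f (i + 1)) ⊔ edge (f i) (f (j - 1))
  have hH : H.CircumferenceLE m :=
    (CircumferenceLE.sup_edge hC.2 hOre).sup_edge (hOre'.mono le_sup_left)
  obtain ⟨v, c, hc, hlen⟩ := hC.1.exists_isCycle_length_gt (H := H) (le_sup_left.trans le_sup_left) hij
    (by simp [H, edge_adj, hOre.1]) (by simp [H, edge_adj, hOre'.1.symm]) hInd hIch
    (fun z hz => hR.2.1 z (hIR z hz)) hx hy hix hjy.symm
  exact (hH v c hc).not_gt hlen

end Main

theorem lemma3c_general {V : Type*} [Fintype V]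
    (G : SimpleGraph V) [DecidableRel G.Adj]
    (m : ℕ) (f : ZMod m → V) (hC : IsLongestCycle G m f)
    (R : Set V) (hR : IsComponentOutside G m f R)
    (i j : ZMod m) (hij : i ≠ j)
    (hi : ∃ x ∈ R, G.Adj (f i) x) (hj : ∃ x ∈ R, G.Adj (f j) x)
    (hOre : OreEdge G (f (i - 1)) (f (i + 1))) :
    ¬OreEdge G (f i) (f (j - 1)) ∧ ¬OreEdge G (f i) (f (j + 1)) := by
  refine ⟨not_oreEdge_pred_of_oreEdge hC hR hij hi hj hOre, ?_⟩
  have := not_oreEdge_pred_of_oreEdge hC.comp_neg hR.comp_neg (neg_injective.ne hij)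
    (by simpa using hi) (by simpa using hj) (by simpa [sub_eq_add_neg, add_comm] using hOre.symm)
  simpa [add_comm] using this

/-- **Lemma 3(c) of the paper.** `G` non-Hamiltonian, `C` a longest cycle, `R` a
component of `G - V(C)`, `f i`, `f j` distinct vertices of `C` having neighbors
in `R`. If `{(f i)⁻, (f i)⁺}` is an Ore-edge, then neither `{f i, (f j)⁻}` nor
`{f i, (f j)⁺}` is an Ore-edge. -/
theorem lemma3c {V : Type*} [Fintype V] [DecidableEq V]
    (G : SimpleGraph V) [DecidableRel G.Adj]
    (hnh : ¬G.IsHamiltonian)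
    (m : ℕ) (f : ZMod m → V) (hC : IsLongestCycle G m f)
    (R : Set V) (hR : IsComponentOutside G m f R)
    (i j : ZMod m) (hij : i ≠ j)
    (hi : ∃ x ∈ R, G.Adj (f i) x) (hj : ∃ x ∈ R, G.Adj (f j) x)
    (hOre : OreEdge G (f (i - 1)) (f (i + 1))) :
    ¬OreEdge G (f i) (f (j - 1)) ∧ ¬OreEdge G (f i) (f (j + 1)) :=
  lemma3c_general G m f hC R hR i j hij hi hj hOre
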